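/- arXiv:2206.10267 — 6 statements merged into one kernel-verified Lean document; each statement's English description precedes it below -/
import Mathlib

section
/- Let X be a complete class of finite groups, G a finite group, H a Hall X-subgroup of G, and N a subnormal subgroup of G. Then H ∩ N is a Hall X-subgroup of N. -/
open scoped Pointwise

/-- A class of (finite) groups, given as a predicate on group types. -/
abbrev GroupClass := ∀ (G : Type) [Group G], Prop

/-- `X` is a complete class: nonempty and closed under subgroups, quotients
(homomorphic images) and extensions, within finite groups. -/
def IsCompleteClass (X : GroupClass) : Prop :=
  (∃ (G : Type) (_ : Group G) (_ : Finite G), X G) ∧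
  (∀ (G H : Type) [Group G] [Group H], X G → (G ≃* H) → X H) ∧
  (∀ (G : Type) [Group G], X G → ∀ H : Subgroup G, X H) ∧
  (∀ (G : Type) [Group G] (N : Subgroup G) [N.Normal], X G → X (G ⧸ N)) ∧
  (∀ (G : Type) [Group G] [Finite G] (N : Subgroup G) [N.Normal],
      X ↥N → X (G ⧸ N) → X G)

/-- An `X'`-group: a group with no nontrivial `X`-subgroups. -/
def IsXPrimeGroup (X : GroupClass) (G : Type) [Group G] : Prop :=
  ∀ K : Subgroup G, X ↥K → K = ⊥

/-- A Hall `X`-subgroup: an `X`-subgroup whose index is not divisible by any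
prime `p` such that `X` contains a group of order `p`. -/
def IsHallXSubgroup (X : GroupClass) {G : Type} [Group G] (H : Subgroup G) : Prop :=
  X ↥H ∧ ∀ p : ℕ, p.Prime →
    (∃ (P : Type) (_ : Group P), X P ∧ Nat.card P = p) → ¬ p ∣ H.index

/-- A maximal `X`-subgroup: an `X`-subgroup maximal under inclusion among
`X`-subgroups. -/
def IsMaxXSubgroup (X : GroupClass) {G : Type} [Group G] (H : Subgroup G) : Prop :=
  X ↥H ∧ ∀ K : Subgroup G, X ↥K → H ≤ K → K = H

/-- `H` is subnormal in `G`. -/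
def IsSubnormalIn {G : Type} [Group G] (H : Subgroup G) : Prop :=
  ∃ (n : ℕ) (c : ℕ → Subgroup G), c 0 = H ∧ c n = ⊤ ∧
    ∀ i < n, c i ≤ c (i + 1) ∧ ((c i).subgroupOf (c (i + 1))).Normal

/-- A submaximal `X`-subgroup: `H = G ∩ H*` for some maximal `X`-subgroup `H*`
of a finite group `G*` containing `G` as a subnormal subgroup. -/
def IsSubmaxXSubgroup (X : GroupClass) {G : Type} [Group G] (H : Subgroup G) : Prop :=
  ∃ (Gs : Type) (_ : Group Gs) (_ : Finite Gs) (ι : G →* Gs),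
    Function.Injective ι ∧ IsSubnormalIn ι.range ∧
    ∃ Hs : Subgroup Gs, IsMaxXSubgroup X Hs ∧ H = Hs.comap ι

/-- The factor `B/A` is an `X`-group (phrased via a surjective hom with kernel `A`). -/
def IsXFactor (X : GroupClass) {G : Type} [Group G] (A B : Subgroup G) : Prop :=
  ∃ (Q : Type) (_ : Group Q) (φ : ↥B →* Q),
    Function.Surjective φ ∧ φ.ker = A.subgroupOf B ∧ X Q

/-- The factor `B/A` is an `X'`-group. -/
def IsXPrimeFactor (X : GroupClass) {G : Type} [Group G] (A B : Subgroup G) : Prop :=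
  ∃ (Q : Type) (_ : Group Q) (φ : ↥B →* Q),
    Function.Surjective φ ∧ φ.ker = A.subgroupOf B ∧ IsXPrimeGroup X Q

/-- `G` is `X`-separable: it has a normal series whose factors are `X`- or
`X'`-groups. -/
def IsXSeparable (X : GroupClass) (G : Type) [Group G] : Prop :=
  ∃ (m : ℕ) (s : ℕ → Subgroup G), s 0 = ⊤ ∧ s m = ⊥ ∧
    ∀ i < m, s (i + 1) ≤ s i ∧ (s i).Normal ∧ (s (i + 1)).Normal ∧
      (IsXFactor X (s (i + 1)) (s i) ∨ IsXPrimeFactor X (s (i + 1)) (s i))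

/-- `G` is `X`-separable of `X`-length at most `n`: it has a normal series with
factors `X`- or `X'`-groups and at most `n` `X`-factors. -/
def XSeparableLengthLE (X : GroupClass) (G : Type) [Group G] (n : ℕ) : Prop :=
  ∃ (m : ℕ) (s : ℕ → Subgroup G) (f : ℕ → Bool), s 0 = ⊤ ∧ s m = ⊥ ∧
    ((Finset.range m).filter (fun i => f i = true)).card ≤ n ∧
    ∀ i < m, s (i + 1) ≤ s i ∧ (s i).Normal ∧ (s (i + 1)).Normal ∧
      (if f i = true then IsXFactor X (s (i + 1)) (s i)
       else IsXPrimeFactor X (s (i + 1)) (s i))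

/-- The conjugate `H^x = x⁻¹ H x`. -/
def conjS {G : Type} [Group G] (x : G) (H : Subgroup G) : Subgroup G :=
  H.map (MulAut.conj x⁻¹).toMonoidHom

/-- `H ≡ K` modulo the tail series `(*i)` of `s`: the projections onto the
factors `s j / s (j+1)` for `i ≤ j < n` coincide, compared as subsets
`(H ∩ s j)·s (j+1)`. -/
def CongModFrom {G : Type} [Group G] (s : ℕ → Subgroup G) (n i : ℕ)
    (H K : Subgroup G) : Prop :=
  ∀ j, i ≤ j → j < n →
    ((↑(H ⊓ s j) * ↑(s (j + 1)) : Set G) = ↑(K ⊓ s j) * ↑(s (j + 1)))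

/-- `H ≡ K (mod *)`: all projections onto the factors of the series coincide. -/
def CongMod {G : Type} [Group G] (s : ℕ → Subgroup G) (n : ℕ)
    (H K : Subgroup G) : Prop :=
  CongModFrom s n 0 H K

/-- The normalizer of `H` modulo the tail series `(*i)`: elements stabilizing
the tail series with `H^x ≡ H (mod *i)`. -/
def NStarFrom {G : Type} [Group G] (s : ℕ → Subgroup G) (n i : ℕ)
    (H : Subgroup G) : Set G :=
  { x | (∀ j, i ≤ j → j ≤ n → conjS x (s j) = s j) ∧
        CongModFrom s n i (conjS x H) H }

/-!
For `K` normal in `G`, the cosets of `H ∩ K` in `K` correspond to the cosets of `H` in `HK`, so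
`|K : H ∩ K| = |HK : H|` divides `|G : H|`. Along a subnormal series this divisibility propagates,
so `|N : H ∩ N|` divides `|G : H|` and hence has no prime divisor of an `X`-group; `H ∩ N` is an
`X`-group because it is a subgroup of `H`.
-/

namespace Subgroup

variable {G : Type*} [Group G]

theorem relIndex_sup_eq_of_normal_right (H K : Subgroup G) [K.Normal] [K.FiniteIndex] :
    H.relIndex (H ⊔ K) = H.relIndex K := by
  have hm : K.relIndex H ≠ 0 :=
    ne_zero_of_dvd_ne_zero FiniteIndex.index_ne_zero (relIndex_dvd_index_of_normal K H)
  -- count `|H ⊔ K : H ⊓ K|` through `H` and through `K`, using `|H ⊔ K : K| = |H : H ⊓ K|`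
  have key : (H ⊓ K).relIndex H * H.relIndex (H ⊔ K) =
      (H ⊓ K).relIndex K * K.relIndex (H ⊔ K) := by
    rw [relIndex_mul_relIndex _ _ _ inf_le_left le_sup_left,
      relIndex_mul_relIndex _ _ _ inf_le_right le_sup_right]
  rw [inf_relIndex_left, inf_relIndex_right, relIndex_sup_right, mul_comm] at key
  exact Nat.eq_of_mul_eq_mul_right (Nat.pos_of_ne_zero hm) key

theorem relIndex_dvd_index_of_normal_right (H K : Subgroup G) [K.Normal] [K.FiniteIndex] :
    H.relIndex K ∣ H.index :=
  relIndex_sup_eq_of_normal_right H K ▸ relIndex_dvd_index_of_le le_sup_left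

theorem relIndex_dvd_index_of_isSubnormal [Finite G] (H : Subgroup G) {K : Subgroup G}
    (hK : K.IsSubnormal) : H.relIndex K ∣ H.index := by
  induction hK with
  | top => rw [relIndex_top_right]
  | step L K hLK _ hL ih =>
    have hstep : H.relIndex L ∣ H.relIndex K := by
      rw [← relIndex_subgroupOf hLK]
      exact relIndex_dvd_index_of_normal_right _ _
    exact hstep.trans ih

end Subgroup

theorem IsSubnormalIn.isSubnormal {G : Type} [Group G] {N : Subgroup G} (hN : IsSubnormalIn N) :
    N.IsSubnormal := by
  obtain ⟨n, c, rfl, hcn, hc⟩ := hN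
  refine Nat.decreasingInduction (motive := fun i _ => (c i).IsSubnormal)
    (fun i hi ih => ?_) (hcn ▸ Subgroup.IsSubnormal.top) (Nat.zero_le n)
  exact .step _ _ (hc i hi).1 ih (hc i hi).2

theorem IsHallXSubgroup.of_index_dvd {X : GroupClass} {G G' : Type} [Group G] [Group G']
    {H : Subgroup G} {K : Subgroup G'} (hH : IsHallXSubgroup X H) (hK : X K)
    (hdvd : K.index ∣ H.index) : IsHallXSubgroup X K :=
  ⟨hK, fun p hp hpX hpK => hH.2 p hp hpX (hpK.trans hdvd)⟩

theorem GroupClass.inf_subgroupOf {X : GroupClass}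
    (hXiso : ∀ (G H : Type) [Group G] [Group H], X G → (G ≃* H) → X H)
    (hXsub : ∀ (G : Type) [Group G], X G → ∀ H : Subgroup G, X H)
    {G : Type} [Group G] {H : Subgroup G} (hH : X H) (N : Subgroup G) :
    X ((H ⊓ N).subgroupOf N) :=
  hXiso _ _ (hXsub _ hH ((H ⊓ N).subgroupOf H))
    ((Subgroup.subgroupOfEquivOfLe inf_le_left).trans
      (Subgroup.subgroupOfEquivOfLe inf_le_right).symm)

theorem stmt3 (X : GroupClass) (hX : IsCompleteClass X)
    (G : Type) [Group G] [Finite G] (H N : Subgroup G)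
    (hH : IsHallXSubgroup X H) (hN : IsSubnormalIn N) :
    IsHallXSubgroup X ((H ⊓ N).subgroupOf N) := by
  obtain ⟨-, hXiso, hXsub, -, -⟩ := hX
  refine hH.of_index_dvd (GroupClass.inf_subgroupOf hXiso hXsub hH.1 N) ?_
  rw [← Subgroup.relIndex, Subgroup.inf_relIndex_right]
  exact H.relIndex_dvd_index_of_isSubnormal hN.isSubnormal
end

section
/- Let X be a complete class of finite groups, G a finite group, H a submaximal X-subgroup of G, and N a subnormal subgroup of G. Then H ∩ N is a submaximal X-subgroup of N. -/
open scoped Pointwise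

private lemma aux_subgroupOf_normal_map {A B : Type} [Group A] [Group B] (φ : A →* B)
    {P Q : Subgroup A} (hPQ : P ≤ Q) (h : (P.subgroupOf Q).Normal) :
    ((P.map φ).subgroupOf (Q.map φ)).Normal := by
  constructor
  rintro ⟨x, hxQ⟩ hx ⟨g, hgQ⟩
  simp only [Subgroup.mem_subgroupOf] at hx ⊢
  obtain ⟨p, hp, rfl⟩ := hx
  obtain ⟨q, hq, rfl⟩ := hgQ
  have hconj : q * p * q⁻¹ ∈ P := by
    have := h.conj_mem ⟨p, hPQ hp⟩ (by simpa [Subgroup.mem_subgroupOf] using hp) ⟨q, hq⟩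
    simpa [Subgroup.mem_subgroupOf] using this
  exact ⟨q * p * q⁻¹, hconj, by simp⟩

private lemma aux_subnormal_trans {G : Type} [Group G] {M K : Subgroup G}
    (hM : ∃ (m : ℕ) (c : ℕ → Subgroup G), c 0 = M ∧ c m = K ∧
      ∀ i < m, c i ≤ c (i + 1) ∧ ((c i).subgroupOf (c (i + 1))).Normal)
    (hK : IsSubnormalIn K) : IsSubnormalIn M := by
  obtain ⟨m, c, hc0, hcm, hcs⟩ := hM
  obtain ⟨n, d, hd0, hdn, hds⟩ := hK
  refine ⟨m + n, fun i => if i < m then c i else d (i - m), ?_, ?_, ?_⟩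
  · show (if 0 < m then c 0 else d (0 - m)) = M
    by_cases h : 0 < m
    · rw [if_pos h, hc0]
    · rw [if_neg h, show (0 : ℕ) - m = 0 from by omega, hd0, ← hcm,
        show m = 0 from by omega, hc0]
  · show (if m + n < m then c (m + n) else d (m + n - m)) = ⊤
    rw [if_neg (by omega), show m + n - m = n from by omega, hdn]
  · intro i hi
    show (if i < m then c i else d (i - m)) ≤ (if i + 1 < m then c (i + 1) else d (i + 1 - m)) ∧
      ((if i < m then c i else d (i - m)).subgroupOf
        (if i + 1 < m then c (i + 1) else d (i + 1 - m))).Normal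
    by_cases h1 : i < m
    · rw [if_pos h1]
      by_cases h2 : i + 1 < m
      · rw [if_pos h2]; exact hcs i h1
      · rw [if_neg h2, show i + 1 - m = 0 from by omega, hd0, ← hcm,
          show m = i + 1 from by omega]
        exact hcs i h1
    · rw [if_neg h1, if_neg (show ¬ i + 1 < m from by omega),
        show i + 1 - m = (i - m) + 1 from by omega]
      exact hds (i - m) (by omega)

private lemma aux_subnormal_map {G Gs : Type} [Group G] [Group Gs] (φ : G →* Gs)
    {N : Subgroup G} (hN : IsSubnormalIn N) (hr : IsSubnormalIn φ.range) :
    IsSubnormalIn (N.map φ) := by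
  obtain ⟨n, c, hc0, hcn, hcs⟩ := hN
  refine aux_subnormal_trans ⟨n, fun i => (c i).map φ, by simp [hc0], ?_, ?_⟩ hr
  · show (c n).map φ = φ.range
    rw [hcn, ← MonoidHom.range_eq_map]
  · intro i hi
    exact ⟨Subgroup.map_mono (hcs i hi).1,
      aux_subgroupOf_normal_map φ (hcs i hi).1 (hcs i hi).2⟩

theorem stmt4 (X : GroupClass) (hX : IsCompleteClass X)
    (G : Type) [Group G] [Finite G] (H N : Subgroup G)
    (hH : IsSubmaxXSubgroup X H) (hN : IsSubnormalIn N) :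
    IsSubmaxXSubgroup X ((H ⊓ N).subgroupOf N) := by
  obtain ⟨Gs, _, _, ι, hinj, hrange, Hs, hHsmax, hHeq⟩ := hH
  refine ⟨Gs, inferInstance, inferInstance, ι.comp N.subtype,
    hinj.comp N.subtype_injective, ?_, Hs, hHsmax, ?_⟩
  · rw [MonoidHom.range_comp, Subgroup.range_subtype]
    exact aux_subnormal_map ι hN hrange
  · rw [← Subgroup.comap_comap, ← hHeq]
    ext x
    simp [Subgroup.mem_subgroupOf, x.2]
end

section
/- Let G be a finite group with a series G = G_0 ≥ G_1 ≥ ... ≥ G_n = 1 and H, K ≤ G with H ≡ K (mod *) (all projections coincide). Then N_G^{(*)}(H) = N_G^{(*)}(K). -/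
open scoped Pointwise

lemma congModFrom_symm {G : Type} [Group G] {s : ℕ → Subgroup G} {n i : ℕ}
    {H K : Subgroup G} (h : CongModFrom s n i H K) : CongModFrom s n i K H :=
  fun j h1 h2 => (h j h1 h2).symm

lemma congModFrom_trans {G : Type} [Group G] {s : ℕ → Subgroup G} {n i : ℕ}
    {H K L : Subgroup G} (h : CongModFrom s n i H K) (h' : CongModFrom s n i K L) :
    CongModFrom s n i H L :=
  fun j h1 h2 => (h j h1 h2).trans (h' j h1 h2)

lemma congModFrom_conj {G : Type} [Group G] {s : ℕ → Subgroup G} {n : ℕ}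
    {H K : Subgroup G} (x : G) (hx : ∀ j, 0 ≤ j → j ≤ n → conjS x (s j) = s j)
    (h : CongModFrom s n 0 H K) : CongModFrom s n 0 (conjS x H) (conjS x K) := by
  intro j h1 h2
  have key : ∀ L : Subgroup G,
      (↑(conjS x L ⊓ s j) * ↑(s (j + 1)) : Set G) =
        (MulAut.conj x⁻¹).toMonoidHom '' ((↑(L ⊓ s j) * ↑(s (j + 1)) : Set G)) := by
    intro L
    rw [Set.image_mul]
    congr 1
    · conv_lhs => rw [← hx j (Nat.zero_le _) (le_of_lt h2)]
      rw [show conjS x L ⊓ conjS x (s j) = conjS x (L ⊓ s j) from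
            (Subgroup.map_inf L (s j) _ (MulAut.conj x⁻¹).injective).symm,
          conjS, Subgroup.coe_map]
    · conv_lhs => rw [← hx (j + 1) (Nat.zero_le _) h2]
      rw [conjS, Subgroup.coe_map]
  rw [key H, key K, h j h1 h2]

theorem stmt8 (G : Type) [Group G] [Finite G] (s : ℕ → Subgroup G) (n : ℕ)
    (h0 : s 0 = ⊤) (hn : s n = ⊥) (hchain : ∀ i < n, s (i + 1) ≤ s i)
    (H K : Subgroup G) (hHK : CongMod s n H K) :
    NStarFrom s n 0 H = NStarFrom s n 0 K := by
  ext x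
  constructor
  · rintro ⟨hst, hc⟩
    exact ⟨hst, congModFrom_trans (congModFrom_trans
      (congModFrom_conj x hst (congModFrom_symm hHK)) hc) hHK⟩
  · rintro ⟨hst, hc⟩
    exact ⟨hst, congModFrom_trans (congModFrom_trans
      (congModFrom_conj x hst hHK) hc) (congModFrom_symm hHK)⟩
end

section
/- Let G be a finite group with a series G = G_0 ≥ G_1 ≥ ... ≥ G_n = 1, and for 0 ≤ i ≤ n let N_G^{(*i)}(H_i) denote the normalizer of H_i = H ∩ G_i modulo the tail series G_i ≥ G_{i+1} ≥ ... ≥ G_n = 1. Then N_G^{(*)}(H) = N_G^{(*0)}(H_0) ≤ N_G^{(*1)}(H_1) ≤ ... ≤ N_G^{(*n)}(H_n) = G. -/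
open scoped Pointwise

lemma conjS_inf {G : Type} [Group G] (x : G) (A B : Subgroup G) :
    conjS x (A ⊓ B) = conjS x A ⊓ conjS x B := by
  exact Subgroup.map_inf A B _ (MulAut.conj x⁻¹).injective

lemma conjS_bot {G : Type} [Group G] (x : G) : conjS x (⊥ : Subgroup G) = ⊥ := by
  simp [conjS]

theorem stmt9 (G : Type) [Group G] [Finite G] (s : ℕ → Subgroup G) (n : ℕ)
    (h0 : s 0 = ⊤) (hn : s n = ⊥) (hchain : ∀ i < n, s (i + 1) ≤ s i)
    (H : Subgroup G) :
    NStarFrom s n 0 H = NStarFrom s n 0 (H ⊓ s 0) ∧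
    (∀ i < n, NStarFrom s n i (H ⊓ s i) ⊆ NStarFrom s n (i + 1) (H ⊓ s (i + 1))) ∧
    NStarFrom s n n (H ⊓ s n) = Set.univ := by
  have hmono : ∀ k j, k ≤ j → j ≤ n → s j ≤ s k := by
    intro k j hkj
    induction hkj with
    | refl => intro _; exact le_rfl
    | @step m hm ih =>
      intro hmn
      exact (hchain m (by omega)).trans (ih (by omega))
  refine ⟨by rw [h0, inf_top_eq], ?_, ?_⟩
  · intro i hi x hx
    obtain ⟨hx1, hx2⟩ := hx
    refine ⟨fun j hj1 hj2 => hx1 j (by omega) hj2, ?_⟩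
    intro j hj1 hj2
    have hsj1 : s j ≤ s (i + 1) := hmono _ _ hj1 (le_of_lt hj2)
    have hsji : s j ≤ s i := hsj1.trans (hchain i hi)
    have hfix : conjS x (s (i + 1)) = s (i + 1) := hx1 (i + 1) (by omega) (by omega)
    have hfixi : conjS x (s i) = s i := hx1 i le_rfl (by omega)
    have e1 : conjS x (H ⊓ s (i + 1)) ⊓ s j = conjS x (H ⊓ s i) ⊓ s j := by
      rw [conjS_inf, conjS_inf, hfix, hfixi, inf_assoc, inf_assoc,
        inf_eq_right.mpr hsj1, inf_eq_right.mpr hsji]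
    have e2 : (H ⊓ s (i + 1)) ⊓ s j = (H ⊓ s i) ⊓ s j := by
      rw [inf_assoc, inf_assoc, inf_eq_right.mpr hsj1, inf_eq_right.mpr hsji]
    rw [e1, e2]
    exact hx2 j (by omega) hj2
  · ext x
    simp only [Set.mem_univ, iff_true, NStarFrom, Set.mem_setOf_eq]
    constructor
    · intro j hj1 hj2
      have : j = n := le_antisymm hj2 hj1
      subst this
      rw [hn, conjS_bot]
    · intro j hj1 hj2
      omega
end

section
/- Let n ≥ 5, G = S_n acting on Ω = {1,...,n}, and H the stabilizer of the point n (so H ≅ S_{n-1}). Let H* be the setwise stabilizer of {n-1, n}, K* = H ∩ H* ≅ S_{n-2}, and K the subgroup of H* consisting of elements inducing an even permutation on Ω \ {n-1, n} (so K ≅ A_{n-2} × S_2). Then, with respect to the normal series S_n ⊳ A_n ⊳ 1, K and K* have the same projections onto the two factors, i.e., K·A_n = K*·A_n and K ∩ A_n = K* ∩ A_n; moreover K* ≤ H but K is not conjugate in S_n to any subgroup of H, since K contains a fixed-point-free permutation. -/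
open scoped Pointwise

open Equiv Equiv.Perm

lemma aux_fpf (m : ℕ) (hm : 3 ≤ m) :
    ∃ π : Equiv.Perm (Fin m), Equiv.Perm.sign π = 1 ∧ ∀ x, π x ≠ x := by
  obtain ⟨k, rfl⟩ : ∃ k, m = k + 1 := ⟨m - 1, by omega⟩
  refine ⟨(finRotate (k+1))^2, ?_, ?_⟩
  · rw [map_pow, sign_finRotate, ← pow_mul, mul_comm, pow_mul]
    norm_num
  · intro x h
    simp only [pow_two, Equiv.Perm.mul_apply, finRotate_succ_apply] at h
    rw [add_assoc] at h
    have h2 : (1 + 1 : Fin (k+1)) = 0 := add_left_cancel (a := x) (by rw [h, add_zero])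
    have h3 : ((1 + 1 : Fin (k+1))).val = 0 := by rw [h2]; rfl
    have h4 : ((1 + 1 : Fin (k+1))).val = ((1:Fin (k+1)).val + (1:Fin (k+1)).val) % (k+1) := rfl
    have h5 : (1 : Fin (k+1)).val = 1 % (k+1) := rfl
    have h6 : 1 % (k+1) = 1 := Nat.mod_eq_of_lt (by omega)
    rw [h4, h5, h6, Nat.mod_eq_of_lt (by omega)] at h3
    omega

lemma aux_mul_alt {n : ℕ} (U : Subgroup (Equiv.Perm (Fin n))) (u : Equiv.Perm (Fin n))
    (hu : u ∈ U) (hsu : Equiv.Perm.sign u = -1) :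
    (U : Set (Equiv.Perm (Fin n))) * ((alternatingGroup (Fin n) : Subgroup (Equiv.Perm (Fin n))) : Set (Equiv.Perm (Fin n))) = Set.univ := by
  ext g
  simp only [Set.mem_univ, iff_true, Set.mem_mul]
  rcases Int.units_eq_one_or (Equiv.Perm.sign g) with h | h
  · exact ⟨1, U.one_mem, g, Equiv.Perm.mem_alternatingGroup.2 h, one_mul g⟩
  · refine ⟨u, hu, u⁻¹ * g, Equiv.Perm.mem_alternatingGroup.2 ?_, by group⟩
    rw [map_mul, map_inv, hsu, h]
    rfl

theorem stmt16 (n : ℕ) (hn : 5 ≤ n) (a b : Fin n)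
    (ha : (a : ℕ) = n - 2) (hb : (b : ℕ) = n - 1)
    (H Hs Ks K : Subgroup (Equiv.Perm (Fin n)))
    (hH : H = MulAction.stabilizer (Equiv.Perm (Fin n)) b)
    (hHs : Hs = MulAction.stabilizer (Equiv.Perm (Fin n)) ({a, b} : Set (Fin n)))
    (hKs : Ks = H ⊓ Hs)
    (hK : (K : Set (Equiv.Perm (Fin n))) =
      {σ | σ ∈ Hs ∧ Equiv.Perm.sign σ = (if σ a = a then 1 else -1)}) :
    ((K : Set (Equiv.Perm (Fin n))) * ↑(alternatingGroup (Fin n)) =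
      (Ks : Set (Equiv.Perm (Fin n))) * ↑(alternatingGroup (Fin n))) ∧
    K ⊓ alternatingGroup (Fin n) = Ks ⊓ alternatingGroup (Fin n) ∧
    Ks ≤ H ∧
    (∃ σ ∈ K, ∀ p : Fin n, σ p ≠ p) ∧
    ¬ ∃ x : Equiv.Perm (Fin n), conjS x K ≤ H := by
  have hab : a ≠ b := by
    intro h
    rw [Fin.ext_iff, ha, hb] at h
    omega
  have smul_pair : ∀ σ : Equiv.Perm (Fin n), σ • ({a, b} : Set (Fin n)) = {σ a, σ b} := by
    intro σ
    rw [Set.smul_set_insert, Set.smul_set_singleton]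
    rfl
  have memHs : ∀ σ : Equiv.Perm (Fin n), σ ∈ Hs ↔ ({σ a, σ b} : Set (Fin n)) = {a, b} := by
    intro σ
    rw [hHs, MulAction.mem_stabilizer_iff, smul_pair]
  have hs_cases : ∀ σ : Equiv.Perm (Fin n), σ ∈ Hs →
      (σ a = a ∧ σ b = b) ∨ (σ a = b ∧ σ b = a) := by
    intro σ hσ
    rw [memHs] at hσ
    have h1 : σ a ∈ ({a, b} : Set (Fin n)) := by rw [← hσ]; simp
    have h2 : σ b ∈ ({a, b} : Set (Fin n)) := by rw [← hσ]; simp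
    simp only [Set.mem_insert_iff, Set.mem_singleton_iff] at h1 h2
    rcases h1 with h1 | h1 <;> rcases h2 with h2 | h2
    · exact absurd (σ.injective (h2.trans h1.symm)).symm hab
    · exact Or.inl ⟨h1, h2⟩
    · exact Or.inr ⟨h1, h2⟩
    · exact absurd (σ.injective (h1.trans h2.symm)) hab
  have memHs_of : ∀ σ : Equiv.Perm (Fin n), σ a = a → σ b = b → σ ∈ Hs := by
    intro σ h1 h2
    rw [memHs, h1, h2]
  have memHs_of' : ∀ σ : Equiv.Perm (Fin n), σ a = b → σ b = a → σ ∈ Hs := by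
    intro σ h1 h2
    rw [memHs, h1, h2]
    exact Set.pair_comm b a
  have memK : ∀ σ : Equiv.Perm (Fin n), σ ∈ K ↔
      σ ∈ Hs ∧ Equiv.Perm.sign σ = (if σ a = a then 1 else -1) := by
    intro σ
    rw [← SetLike.mem_coe, hK]
    rfl
  have memH : ∀ σ : Equiv.Perm (Fin n), σ ∈ H ↔ σ b = b := by
    intro σ
    rw [hH, MulAction.mem_stabilizer_iff]
    rfl
  -- construct the fixed-point-free element σ₀ of K
  have h2n : n - 2 ≤ n := by omega
  obtain ⟨π, hπsign, hπfpf⟩ := aux_fpf (n - 2) (by omega)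
  set f : Fin (n - 2) ↪ Fin n := Fin.castLEEmb h2n with hfdef
  have hrange : ∀ x : Fin n, x ∈ Set.range f ↔ (x : ℕ) < n - 2 := by
    intro x
    constructor
    · rintro ⟨y, rfl⟩
      exact y.isLt
    · intro hx
      exact ⟨⟨(x : ℕ), hx⟩, rfl⟩
  set τ : Equiv.Perm (Fin n) := π.viaFintypeEmbedding f with hτdef
  have hτ_notin : ∀ x : Fin n, ¬ (x : ℕ) < n - 2 → τ x = x := by
    intro x hx
    exact Equiv.Perm.viaFintypeEmbedding_apply_notMem_range π f (fun hc => hx ((hrange x).1 hc))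
  have hτa : τ a = a := hτ_notin a (by omega)
  have hτb : τ b = b := hτ_notin b (by omega)
  have hτ_in : ∀ x : Fin n, (x : ℕ) < n - 2 → τ x ≠ x ∧ ((τ x : ℕ) < n - 2) := by
    intro x hx
    have hxr : x = f ⟨(x : ℕ), hx⟩ := rfl
    rw [hxr, hτdef, Equiv.Perm.viaFintypeEmbedding_apply_image]
    refine ⟨fun hcon => hπfpf ⟨(x : ℕ), hx⟩ (f.injective hcon), ?_⟩
    exact (π ⟨(x : ℕ), hx⟩).isLt
  have hτsign : Equiv.Perm.sign τ = 1 := by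
    rw [hτdef, Equiv.Perm.viaFintypeEmbedding_sign, hπsign]
  set σ₀ : Equiv.Perm (Fin n) := Equiv.swap a b * τ with hσ₀def
  have hσ₀a : σ₀ a = b := by
    rw [hσ₀def, Equiv.Perm.mul_apply, hτa, Equiv.swap_apply_left]
  have hσ₀b : σ₀ b = a := by
    rw [hσ₀def, Equiv.Perm.mul_apply, hτb, Equiv.swap_apply_right]
  have hσ₀sign : Equiv.Perm.sign σ₀ = -1 := by
    rw [hσ₀def, map_mul, hτsign, Equiv.Perm.sign_swap hab, mul_one]
  have hσ₀K : σ₀ ∈ K := by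
    rw [memK]
    refine ⟨memHs_of' σ₀ hσ₀a hσ₀b, ?_⟩
    rw [hσ₀a, if_neg (fun h => hab h.symm), hσ₀sign]
  have hσ₀fpf : ∀ p : Fin n, σ₀ p ≠ p := by
    intro p
    by_cases hp : (p : ℕ) < n - 2
    · obtain ⟨hne, hlt⟩ := hτ_in p hp
      rw [hσ₀def, Equiv.Perm.mul_apply,
        Equiv.swap_apply_of_ne_of_ne (fun h => by rw [h, ha] at hlt; omega)
          (fun h => by rw [h, hb] at hlt; omega)]
      exact hne
    · have hp' : p = a ∨ p = b := by
        have hplt := p.isLt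
        rcases Nat.lt_or_ge (p : ℕ) (n - 1) with h | h
        · exact Or.inl (Fin.ext (by omega))
        · exact Or.inr (Fin.ext (by omega))
      rcases hp' with rfl | rfl
      · rw [hσ₀a]; exact fun h => hab h.symm
      · rw [hσ₀b]; exact hab
  -- odd elements
  have hKodd : Equiv.swap a b ∈ K := by
    rw [memK]
    refine ⟨memHs_of' _ (Equiv.swap_apply_left a b) (Equiv.swap_apply_right a b), ?_⟩
    rw [Equiv.swap_apply_left, if_neg (fun h => hab h.symm), Equiv.Perm.sign_swap hab]
  obtain ⟨c, hc⟩ : ∃ c : Fin n, (c : ℕ) = 0 := ⟨⟨0, by omega⟩, rfl⟩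
  obtain ⟨d, hd⟩ : ∃ d : Fin n, (d : ℕ) = 1 := ⟨⟨1, by omega⟩, rfl⟩
  have hcd : c ≠ d := by
    intro h; have := congrArg Fin.val h; rw [hc, hd] at this; omega
  have hbc : b ≠ c := by
    intro h; have := congrArg Fin.val h; rw [hb, hc] at this; omega
  have hbd : b ≠ d := by
    intro h; have := congrArg Fin.val h; rw [hb, hd] at this; omega
  have hac : a ≠ c := by
    intro h; have := congrArg Fin.val h; rw [ha, hc] at this; omega
  have had : a ≠ d := by
    intro h; have := congrArg Fin.val h; rw [ha, hd] at this; omega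
  have hKsodd : Equiv.swap c d ∈ Ks := by
    rw [hKs, Subgroup.mem_inf]
    constructor
    · rw [memH]
      exact Equiv.swap_apply_of_ne_of_ne hbc hbd
    · exact memHs_of _ (Equiv.swap_apply_of_ne_of_ne hac had)
        (Equiv.swap_apply_of_ne_of_ne hbc hbd)
  refine ⟨?_, ?_, ?_, ⟨σ₀, hσ₀K, hσ₀fpf⟩, ?_⟩
  · rw [aux_mul_alt K (Equiv.swap a b) hKodd (Equiv.Perm.sign_swap hab),
      aux_mul_alt Ks (Equiv.swap c d) hKsodd (Equiv.Perm.sign_swap hcd)]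
  · ext σ
    simp only [Subgroup.mem_inf]
    constructor
    · rintro ⟨hσK, hσA⟩
      rw [memK] at hσK
      obtain ⟨hσHs, hsgn⟩ := hσK
      rw [Equiv.Perm.mem_alternatingGroup] at hσA
      have haa : σ a = a := by
        by_contra hne
        rw [if_neg hne, hσA] at hsgn
        exact absurd hsgn (by decide)
      have hbb : σ b = b := by
        rcases hs_cases σ hσHs with ⟨_, h⟩ | ⟨h1, _⟩
        · exact h
        · exact absurd (haa.symm.trans h1) hab
      refine ⟨?_, Equiv.Perm.mem_alternatingGroup.2 hσA⟩
      rw [hKs, Subgroup.mem_inf]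
      exact ⟨(memH σ).2 hbb, hσHs⟩
    · rintro ⟨hσKs, hσA⟩
      rw [hKs, Subgroup.mem_inf] at hσKs
      obtain ⟨hσH, hσHs⟩ := hσKs
      have hbb := (memH σ).1 hσH
      have haa : σ a = a := by
        rcases hs_cases σ hσHs with ⟨h, _⟩ | ⟨_, h2⟩
        · exact h
        · exact absurd (h2.symm.trans hbb) hab
      refine ⟨(memK σ).2 ⟨hσHs, ?_⟩, hσA⟩
      rw [if_pos haa]
      exact Equiv.Perm.mem_alternatingGroup.1 hσA
  · rw [hKs]
    exact inf_le_left
  · rintro ⟨x, hx⟩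
    have hmem : (MulAut.conj x⁻¹).toMonoidHom σ₀ ∈ conjS x K :=
      Subgroup.mem_map.2 ⟨σ₀, hσ₀K, rfl⟩
    have h2 := (memH _).1 (hx hmem)
    simp only [MulEquiv.toMonoidHom_eq_coe, MonoidHom.coe_coe, MulAut.conj_apply, inv_inv,
      Equiv.Perm.mul_apply] at h2
    have h3 : σ₀ (x b) = x b := by
      have h4 := congrArg x h2
      simpa using h4
    exact hσ₀fpf (x b) h3
end

section
/- Let m ≥ 3 be odd, n = 2m, G = S_n with the normal series S_n ⊳ A_n ⊳ 1. Let T* = ⟨(1,2)⟩ and T = ⟨(1,2)(3,4)···(2m-1,2m)⟩. Then T and T* are congruent modulo the series (both have trivial intersection with A_n and the same image in S_n/A_n), T* lies in the stabilizer H of the point n, but T is not conjugate in S_n to any subgroup of H, because T acts semiregularly (fixed-point-freely) on {1,...,n}. -/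
open scoped Pointwise

/-- Auxiliary: the transposition `(2k, 2k+1)` in `Perm (Fin n)` (or `1` if out of range). -/
def sw (n : ℕ) (k : ℕ) : Equiv.Perm (Fin n) :=
  if h : 2 * k + 1 < n then Equiv.swap ⟨2 * k, by omega⟩ ⟨2 * k + 1, h⟩ else 1

theorem stmt17 (m : ℕ) (hm : 3 ≤ m) (hmo : Odd m) (n : ℕ) (hn : n = 2 * m)
    (σ τ : Equiv.Perm (Fin n))
    (hσ : ∀ x : Fin n,
      ((σ x : ℕ) = if (x : ℕ) % 2 = 0 then (x : ℕ) + 1 else (x : ℕ) - 1))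
    (a b c : Fin n) (ha : (a : ℕ) = 0) (hb : (b : ℕ) = 1) (hc : (c : ℕ) = n - 1)
    (hτ : τ = Equiv.swap a b)
    (H T Ts : Subgroup (Equiv.Perm (Fin n)))
    (hH : H = MulAction.stabilizer (Equiv.Perm (Fin n)) c)
    (hT : T = Subgroup.zpowers σ) (hTs : Ts = Subgroup.zpowers τ) :
    T ⊓ alternatingGroup (Fin n) = ⊥ ∧
    Ts ⊓ alternatingGroup (Fin n) = ⊥ ∧
    ((T : Set (Equiv.Perm (Fin n))) * ↑(alternatingGroup (Fin n)) =
      (Ts : Set (Equiv.Perm (Fin n))) * ↑(alternatingGroup (Fin n))) ∧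
    Ts ≤ H ∧
    (∀ t ∈ T, t ≠ 1 → ∀ p : Fin n, t p ≠ p) ∧
    ¬ ∃ x : Equiv.Perm (Fin n), conjS x T ≤ H := by
  subst hn hτ hH hT hTs
  have hn6 : 6 ≤ 2 * m := by omega
  -- σ is fixed-point-free
  have hfix : ∀ x : Fin (2 * m), σ x ≠ x := by
    intro x h
    have h1 := hσ x
    rw [h] at h1
    split at h1 <;> omega
  -- σ is an involution
  have hσ2 : σ * σ = 1 := by
    ext x
    have v := hσ x
    have w := hσ (σ x)
    have hx : (σ (σ x) : ℕ) = (x : ℕ) := by split at v <;> split at w <;> omega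
    simpa [Equiv.Perm.mul_apply] using hx
  -- σ equals a product of m disjoint transpositions
  have key : ∀ j, j ≤ m → ∀ x : Fin (2 * m),
      ((((List.range j).map (sw (2 * m))).prod x : ℕ)
        = if (x : ℕ) < 2 * j then (σ x : ℕ) else (x : ℕ)) := by
    intro j
    induction j with
    | zero => intro _ x; simp
    | succ j ih =>
      intro hj x
      have hlt : 2 * j + 1 < 2 * m := by omega
      have hs : sw (2 * m) j = Equiv.swap ⟨2 * j, by omega⟩ ⟨2 * j + 1, hlt⟩ := dif_pos hlt
      rw [List.range_succ, List.map_append, List.prod_append]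
      simp only [List.map_cons, List.map_nil, List.prod_cons, List.prod_nil, mul_one]
      rw [Equiv.Perm.mul_apply]
      by_cases h0 : (x : ℕ) = 2 * j
      · have hx : x = ⟨2 * j, by omega⟩ := Fin.val_injective (by simpa using h0)
        have hsx : sw (2 * m) j x = ⟨2 * j + 1, hlt⟩ := by
          rw [hs, hx]; exact Equiv.swap_apply_left _ _
        rw [hsx, ih (by omega)]
        have hv : ((⟨2 * j + 1, hlt⟩ : Fin (2 * m)) : ℕ) = 2 * j + 1 := rfl
        rw [hv, if_neg (by omega), if_pos (by omega)]
        have hσx := hσ x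
        rw [h0, if_pos (by omega)] at hσx
        omega
      · by_cases h1 : (x : ℕ) = 2 * j + 1
        · have hx : x = ⟨2 * j + 1, hlt⟩ := Fin.val_injective (by simpa using h1)
          have hsx : sw (2 * m) j x = ⟨2 * j, by omega⟩ := by
            rw [hs, hx]; exact Equiv.swap_apply_right _ _
          rw [hsx, ih (by omega)]
          have hv : ((⟨2 * j, by omega⟩ : Fin (2 * m)) : ℕ) = 2 * j := rfl
          rw [hv, if_neg (by omega), if_pos (by omega)]
          have hσx := hσ x
          rw [h1, if_neg (by omega)] at hσx
          omega
        · have hsx : sw (2 * m) j x = x := by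
            rw [hs]
            exact Equiv.swap_apply_of_ne_of_ne
              (fun h => h0 (by simpa using congrArg Fin.val h))
              (fun h => h1 (by simpa using congrArg Fin.val h))
          rw [hsx, ih (by omega)]
          split_ifs <;> omega
  have hσprod : σ = ((List.range m).map (sw (2 * m))).prod := by
    ext x
    have hx := key m le_rfl x
    rw [if_pos (by omega)] at hx
    exact hx.symm
  have hsignσ : Equiv.Perm.sign σ = -1 := by
    have hl : ∀ g ∈ (List.range m).map (sw (2 * m)), g.IsSwap := by
      intro g hg
      simp only [List.mem_map, List.mem_range] at hg
      obtain ⟨k, hk, rfl⟩ := hg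
      have hlt : 2 * k + 1 < 2 * m := by omega
      rw [show sw (2 * m) k = _ from dif_pos hlt]
      exact ⟨_, _, Fin.ne_of_val_ne (by show 2 * k ≠ 2 * k + 1; omega), rfl⟩
    rw [hσprod, Equiv.Perm.sign_prod_list_swap hl, List.length_map, List.length_range]
    exact Odd.neg_one_pow hmo
  have hab : a ≠ b := Fin.ne_of_val_ne (by omega)
  have hsignτ : Equiv.Perm.sign (Equiv.swap a b) = -1 := Equiv.Perm.sign_swap hab
  have hτ2 : Equiv.swap a b * Equiv.swap a b = 1 := Equiv.swap_mul_self a b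
  -- a generic fact: the zpowers of an involution
  have hzp : ∀ g : Equiv.Perm (Fin (2 * m)), g * g = 1 →
      ∀ x ∈ Subgroup.zpowers g, x = 1 ∨ x = g := by
    intro g hg x hx
    obtain ⟨k, rfl⟩ := hx
    have h2 : g ^ (2 : ℤ) = 1 := by
      rw [show (2 : ℤ) = 1 + 1 by ring, zpow_add, zpow_one, hg]
    rcases Int.even_or_odd k with ⟨t, rfl⟩ | ⟨t, rfl⟩
    · left
      show g ^ (t + t) = 1
      have ht : t + t = 2 * t := by ring
      rw [ht, zpow_mul, h2, one_zpow]
    · right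
      show g ^ (2 * t + 1) = g
      rw [zpow_add, zpow_one, zpow_mul, h2, one_zpow, one_mul]
  have hbot : ∀ g : Equiv.Perm (Fin (2 * m)), g * g = 1 → Equiv.Perm.sign g = -1 →
      Subgroup.zpowers g ⊓ alternatingGroup (Fin (2 * m)) = ⊥ := by
    intro g hg hsg
    rw [eq_bot_iff]
    intro x hx
    rw [Subgroup.mem_inf] at hx
    rcases hzp g hg x hx.1 with rfl | rfl
    · exact Subgroup.mem_bot.mpr rfl
    · exfalso
      have := (Equiv.Perm.mem_alternatingGroup).mp hx.2
      rw [hsg] at this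
      exact absurd this (by decide)
  have huniv : ∀ g : Equiv.Perm (Fin (2 * m)), Equiv.Perm.sign g = -1 →
      ((Subgroup.zpowers g : Set (Equiv.Perm (Fin (2 * m))))
        * (alternatingGroup (Fin (2 * m)) : Set (Equiv.Perm (Fin (2 * m)))) = Set.univ) := by
    intro g hsg
    ext y
    simp only [Set.mem_univ, iff_true]
    by_cases hy : y ∈ alternatingGroup (Fin (2 * m))
    · exact ⟨1, Subgroup.one_mem _, y, hy, one_mul y⟩
    · refine ⟨g, Subgroup.mem_zpowers g, g⁻¹ * y, ?_, by group⟩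
      simp only [SetLike.mem_coe, Equiv.Perm.mem_alternatingGroup] at hy ⊢
      rcases Int.units_eq_one_or (Equiv.Perm.sign y) with h | h
      · exact absurd h hy
      · rw [map_mul, map_inv, hsg, h]; decide
  refine ⟨hbot σ hσ2 hsignσ, hbot _ hτ2 hsignτ, ?_, ?_, ?_, ?_⟩
  · rw [huniv σ hsignσ, huniv _ hsignτ]
  · rw [Subgroup.zpowers_le, MulAction.mem_stabilizer_iff]
    show Equiv.swap a b c = c
    exact Equiv.swap_apply_of_ne_of_ne
      (Fin.ne_of_val_ne (by omega)) (Fin.ne_of_val_ne (by omega))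
  · intro t ht hne p
    rcases hzp σ hσ2 t ht with rfl | rfl
    · exact absurd rfl hne
    · exact hfix p
  · rintro ⟨x, hx⟩
    have hmem : (MulAut.conj x⁻¹) σ ∈ conjS x (Subgroup.zpowers σ) :=
      ⟨σ, Subgroup.mem_zpowers σ, rfl⟩
    have h1 := hx hmem
    rw [MulAction.mem_stabilizer_iff] at h1
    have h2 : (x⁻¹ * σ * x) c = c := by
      simpa [MulAut.conj_apply] using h1
    have h3 : σ (x c) = x c := by
      have := congrArg x h2
      simpa [Equiv.Perm.mul_apply] using this
    exact hfix (x c) h3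
end
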